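/- Let (X,d,m) be a locally compact metric measure space such that (X,d) is a length space. Assume that for all μ_0, μ_1 ∈ P_2(X) with μ_0 absolutely continuous with respect to m, every optimal plan between μ_0 and μ_1 is induced by a map. Then every bijective isometry f of X with f ≠ id satisfies m(Fix(f)) = 0; in particular, condition (a) holds for G = ISO(X) and for G = ISO_m(X). -/

import Mathlib

/-!
Suppose an isometry `f ≠ id` fixed a set of positive measure, and pick `x` with `f x ≠ x`.
Every fixed point `e` is equidistant from `x` and `f x`, so between the normalized restriction
of `m` to a bounded piece of `Fix f` and the uniform measure on `{x, f x}` all couplings have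
the same cost. The product coupling is therefore optimal, yet it splits mass and is not induced
by a map. Condition (a) then holds for any `0 < FIX < m (B₁ x₀)`.
-/

open Metric MeasureTheory ENNReal Set

noncomputable section

/-- Compact-open topology on the isometry group. -/
instance isoCompactOpen (X : Type*) [MetricSpace X] : TopologicalSpace (X ≃ᵢ X) :=
  TopologicalSpace.induced
    (fun f : X ≃ᵢ X => (⟨f, f.continuous⟩ : C(X, X))) ContinuousMap.compactOpen

/-- The subgroup of measure-preserving isometries. -/
def isoMeasure {X : Type*} [MetricSpace X] [MeasurableSpace X] [BorelSpace X]
    (m : Measure X) : Subgroup (X ≃ᵢ X) where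
  carrier := {f | Measure.map f m = m}
  one_mem' := by
    show Measure.map ⇑(1 : X ≃ᵢ X) m = m
    rw [IsometryEquiv.coe_one, Measure.map_id]
  mul_mem' := by
    intro f g hf hg
    show Measure.map ⇑(f * g) m = m
    rw [IsometryEquiv.coe_mul,
      ← Measure.map_map f.continuous.measurable g.continuous.measurable]
    rw [show Measure.map (⇑g) m = m from hg, show Measure.map (⇑f) m = m from hf]
  inv_mem' := by
    intro f hf
    show Measure.map ⇑f⁻¹ m = m
    conv_lhs => rw [← show Measure.map (⇑f) m = m from hf]
    rw [Measure.map_map f⁻¹.continuous.measurable f.continuous.measurable]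
    have h : ⇑f⁻¹ ∘ ⇑f = id := by
      funext y; exact f.symm_apply_apply y
    rw [h, Measure.map_id]

/-- The ball condition: every closed ball is the closure of the open ball. -/
def BallCondition (X : Type*) [MetricSpace X] : Prop :=
  ∀ (x : X) (r : ℝ), 0 < r → closedBall x r = closure (ball x r)

/-- `GHDistLt A B c` : the Gromov–Hausdorff distance between `A` and `B` is `< c`,
expressed through isometric embeddings into `ℓ^∞(ℕ)`. -/
def GHDistLt {X : Type*} [MetricSpace X] {Y : Type*} [MetricSpace Y]
    (A : Set X) (B : Set Y) (c : ℝ) : Prop :=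
  ∃ (f : A → lp (fun _ : ℕ => ℝ) ∞) (g : B → lp (fun _ : ℕ => ℝ) ∞),
    Isometry f ∧ Isometry g ∧
      EMetric.hausdorffEdist (Set.range f) (Set.range g) < ENNReal.ofReal c

/-- `X` has `m`-a.e. Euclidean tangent cones (quantitative form). -/
def HasAEEuclideanTangents {X : Type*} [MetricSpace X] [MeasurableSpace X]
    (m : Measure X) : Prop :=
  ∃ K : ℕ, ∀ ε : ℝ, 0 < ε →
    m ({x : X | ∃ δ > 0, ∃ k ≤ K, ∀ r : ℝ, 0 < r → r < δ →
        GHDistLt (closedBall x r) (closedBall (0 : EuclideanSpace ℝ (Fin k)) r) (ε * r)}ᶜ) = 0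

/-- Condition (a) for a group `G` of isometries. -/
def CondA {X : Type*} [MetricSpace X] [MeasurableSpace X] (m : Measure X)
    (G : Subgroup (X ≃ᵢ X)) : Prop :=
  ∃ (x : X) (s : ℝ) (FIX : ℝ≥0∞), 0 < s ∧ 0 < FIX ∧ FIX < m (ball x s) ∧
    ∀ g ∈ G, g ≠ 1 → m ({y | g y = y} ∩ ball x s) < FIX

/-- `G` is a Lie group: it admits a `C^∞`-manifold structure modeled on some `ℝⁿ`,
compatible with its topology, making multiplication and inversion smooth. -/
def IsLieGroup (G : Type*) [Group G] [TopologicalSpace G] : Prop :=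
  ∃ (n : ℕ) (cs : ChartedSpace (EuclideanSpace ℝ (Fin n)) G),
    @LieGroup ℝ _ (EuclideanSpace ℝ (Fin n)) _ (EuclideanSpace ℝ (Fin n)) _ _
      (modelWithCornersSelf ℝ (EuclideanSpace ℝ (Fin n))) (⊤ : ℕ∞) G _ _ cs

end

/-- `(X, d)` is a length space: the distance is the infimum of lengths
(total variations) of continuous paths joining the two points. -/
def IsLengthSpace (X : Type*) [MetricSpace X] : Prop :=
  ∀ x y : X, edist x y =
    ⨅ (γ : ℝ → X) (_ : ContinuousOn γ (Set.Icc 0 1)) (_ : γ 0 = x) (_ : γ 1 = y),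
      eVariationOn γ (Set.Icc 0 1)

/-- A Borel probability measure has finite second moment. -/
def FiniteSecondMoment {X : Type*} [MetricSpace X] [MeasurableSpace X]
    (μ : Measure X) : Prop :=
  ∃ x₀ : X, ∫⁻ x, edist x x₀ ^ 2 ∂μ ≠ ∞

/-- `pl` is a coupling of `μ₀` and `μ₁`. -/
def IsCoupling {X : Type*} [MetricSpace X] [MeasurableSpace X]
    (pl : Measure (X × X)) (μ₀ μ₁ : Measure X) : Prop :=
  pl.map Prod.fst = μ₀ ∧ pl.map Prod.snd = μ₁

/-- `pl` is an optimal plan between `μ₀` and `μ₁` for the quadratic cost. -/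
def IsOptimalPlan {X : Type*} [MetricSpace X] [MeasurableSpace X]
    (pl : Measure (X × X)) (μ₀ μ₁ : Measure X) : Prop :=
  IsProbabilityMeasure pl ∧ IsCoupling pl μ₀ μ₁ ∧
    ∀ pl' : Measure (X × X), IsProbabilityMeasure pl' → IsCoupling pl' μ₀ μ₁ →
      ∫⁻ p, edist p.1 p.2 ^ 2 ∂pl ≤ ∫⁻ p, edist p.1 p.2 ^ 2 ∂pl'

open ProbabilityTheory

section Coupling

variable {α β : Type*} [MeasurableSpace α] [MeasurableSpace β]

lemma mul_self_measure_eq_of_prod_eq_map_graph {μ₀ : Measure α} {μ₁ : Measure β}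
    [IsProbabilityMeasure μ₀] [SFinite μ₁] {T : α → β} (hT : Measurable T)
    (h : μ₀.prod μ₁ = μ₀.map (fun x => (x, T x))) {B : Set β} (hB : MeasurableSet B) :
    μ₁ B * μ₁ B = μ₁ B := by
  have hgraph : Measurable fun x => (x, T x) := measurable_id.prodMk hT
  have hpre : μ₀ (T ⁻¹' B) = μ₁ B := by
    calc μ₀ (T ⁻¹' B) = μ₀.map (fun x => (x, T x)) (univ ×ˢ B) := by
          rw [Measure.map_apply hgraph (MeasurableSet.univ.prod hB)]
          congr 1
          ext x
          simp
      _ = μ₁ B := by simp [← h, Measure.prod_prod]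
  calc μ₁ B * μ₁ B = μ₀.map (fun x => (x, T x)) ((T ⁻¹' B) ×ˢ B) := by
        rw [← h, Measure.prod_prod, hpre]
    _ = μ₁ B := by
        rw [Measure.map_apply hgraph ((hT hB).prod hB), ← hpre]
        congr 1
        ext x
        simp

end Coupling

section OptimalTransport

variable {X : Type*} [MetricSpace X] [MeasurableSpace X]

lemma isCoupling_prod (μ₀ μ₁ : Measure X) [IsProbabilityMeasure μ₀]
    [IsProbabilityMeasure μ₁] : IsCoupling (μ₀.prod μ₁) μ₀ μ₁ := by
  constructor <;> simp

lemma IsCoupling.lintegral_edist_sq_eq [OpensMeasurableSpace X] {pl : Measure (X × X)}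
    {μ₀ μ₁ : Measure X} (hpl : IsCoupling pl μ₀ μ₁) {E A : Set X} {g : X → ℝ≥0∞}
    (hg : Measurable g) (hE : ∀ᵐ x ∂μ₀, x ∈ E) (hA : ∀ᵐ y ∂μ₁, y ∈ A)
    (heq : ∀ x ∈ E, ∀ y ∈ A, edist x y = g x) :
    ∫⁻ p, edist p.1 p.2 ^ 2 ∂pl = ∫⁻ x, g x ^ 2 ∂μ₀ := by
  obtain ⟨hfst, hsnd⟩ := hpl
  have hE' : ∀ᵐ p ∂pl, p.1 ∈ E :=
    ae_of_ae_map measurable_fst.aemeasurable (hfst ▸ hE)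
  have hA' : ∀ᵐ p ∂pl, p.2 ∈ A :=
    ae_of_ae_map measurable_snd.aemeasurable (hsnd ▸ hA)
  calc ∫⁻ p, edist p.1 p.2 ^ 2 ∂pl = ∫⁻ p, g p.1 ^ 2 ∂pl := by
        refine lintegral_congr_ae ?_
        filter_upwards [hE', hA'] with p hp1 hp2
        rw [heq p.1 hp1 p.2 hp2]
    _ = ∫⁻ x, g x ^ 2 ∂μ₀ := by
        rw [← hfst, lintegral_map (hg.pow_const 2) measurable_fst]

/-- All couplings cost the same, so the product coupling is optimal. -/
lemma isOptimalPlan_prod_of_edist_eq [OpensMeasurableSpace X] {μ₀ μ₁ : Measure X}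
    [IsProbabilityMeasure μ₀] [IsProbabilityMeasure μ₁] {E A : Set X} {g : X → ℝ≥0∞}
    (hg : Measurable g) (hE : ∀ᵐ x ∂μ₀, x ∈ E) (hA : ∀ᵐ y ∂μ₁, y ∈ A)
    (heq : ∀ x ∈ E, ∀ y ∈ A, edist x y = g x) :
    IsOptimalPlan (μ₀.prod μ₁) μ₀ μ₁ := by
  refine ⟨inferInstance, isCoupling_prod μ₀ μ₁, fun pl _ hpl => ?_⟩
  rw [(isCoupling_prod μ₀ μ₁).lintegral_edist_sq_eq hg hE hA heq,
    hpl.lintegral_edist_sq_eq hg hE hA heq]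

lemma finiteSecondMoment_of_ae_mem [Nonempty X] {μ : Measure X} [IsFiniteMeasure μ]
    {S : Set X} (hS : Bornology.IsBounded S) (hμ : ∀ᵐ x ∂μ, x ∈ S) :
    FiniteSecondMoment μ := by
  obtain ⟨x₀⟩ := ‹Nonempty X›
  obtain ⟨r, hr⟩ := hS.subset_closedBall x₀
  refine ⟨x₀, ne_top_of_le_ne_top (b := ∫⁻ _, ENNReal.ofReal r ^ 2 ∂μ) ?_ ?_⟩
  · rw [lintegral_const]
    exact ENNReal.mul_ne_top (by simp) (measure_ne_top μ univ)
  · refine lintegral_mono_ae ?_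
    filter_upwards [hμ] with x hx
    rw [edist_dist]
    exact pow_le_pow_left' (ENNReal.ofReal_le_ofReal (mem_closedBall.1 (hr hx))) 2

end OptimalTransport

lemma exists_measure_inter_closedBall_ne_zero {X : Type*} [PseudoMetricSpace X]
    [MeasurableSpace X] {m : Measure X} {s : Set X} (hs : m s ≠ 0) (x₀ : X) :
    ∃ n : ℕ, m (s ∩ closedBall x₀ n) ≠ 0 := by
  by_contra! h
  refine hs (measure_mono_null (fun y hy => ?_) (measure_iUnion_null h))
  obtain ⟨n, hn⟩ := mem_iUnion.1 ((iUnion_closedBall_nat x₀).symm ▸ mem_univ y)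
  exact mem_iUnion.2 ⟨n, hy, hn⟩

lemma IsometryEquiv.edist_apply_eq_of_apply_eq {X : Type*} [PseudoEMetricSpace X]
    (f : X ≃ᵢ X) {e : X} (he : f e = e) (x : X) : edist e (f x) = edist e x := by
  rw [← f.edist_eq e x, he]

lemma uniformOn_pair_singleton {X : Type*} [MeasurableSpace X] [MeasurableSingletonClass X]
    {x y : X} (hxy : x ≠ y) : uniformOn {x, y} {x} = 2⁻¹ := by
  classical
  have := uniformOn_apply_finset (s := {x, y}) (t := {x}) (Ω := X)
  simp only [Finset.coe_insert, Finset.coe_singleton] at this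
  rw [this, Finset.insert_inter_of_mem (Finset.mem_singleton_self x)]
  simp [hxy]

def PlansInducedByMaps {X : Type*} [MetricSpace X] [MeasurableSpace X] (m : Measure X) :
    Prop :=
  ∀ μ₀ μ₁ : Measure X, IsProbabilityMeasure μ₀ → IsProbabilityMeasure μ₁ →
    FiniteSecondMoment μ₀ → FiniteSecondMoment μ₁ → μ₀ ≪ m →
    ∀ pl : Measure (X × X), IsOptimalPlan pl μ₀ μ₁ →
      ∃ T : X → X, Measurable T ∧ pl = μ₀.map (fun x => (x, T x))

theorem IsometryEquiv.measure_fixedPoints_eq_zero {X : Type*} [MetricSpace X]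
    [MeasurableSpace X] [BorelSpace X] {m : Measure X}
    (hfin : ∀ s : Set X, Bornology.IsBounded s → m s ≠ ∞) (H : PlansInducedByMaps m)
    {f : X ≃ᵢ X} (hf : f ≠ 1) : m {x | f x = x} = 0 := by
  by_contra hF
  obtain ⟨x, hx⟩ : ∃ x, f x ≠ x := by
    by_contra! h
    exact hf (IsometryEquiv.ext h)
  obtain ⟨n, hE⟩ := exists_measure_inter_closedBall_ne_zero hF x
  set E := {y | f y = y} ∩ closedBall x n
  have hEb : Bornology.IsBounded E := isBounded_closedBall.subset inter_subset_right
  have hEm : MeasurableSet E :=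
    (isClosed_eq f.continuous continuous_id).measurableSet.inter measurableSet_closedBall
  have := cond_isProbabilityMeasure_of_finite hE (hfin E hEb)
  set A : Set X := {x, f x}
  have : IsProbabilityMeasure (uniformOn A) :=
    isProbabilityMeasure_uniformOn (toFinite A) (insert_nonempty x {f x})
  -- `uniformOn A` is `count[|A]`
  have hA : ∀ᵐ y ∂uniformOn A, y ∈ A := ae_cond_mem (toFinite A).measurableSet
  have hequidistant : ∀ e ∈ E, ∀ y ∈ A, edist e y = edist e x := by
    rintro e ⟨he, -⟩ y (rfl | rfl)
    · rfl
    · exact f.edist_apply_eq_of_apply_eq he x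
  have hopt := isOptimalPlan_prod_of_edist_eq (continuous_id.edist continuous_const).measurable
    (ae_cond_mem (μ := m) hEm) hA hequidistant
  have : Nonempty X := ⟨x⟩
  obtain ⟨T, hT, hplan⟩ := H _ _ inferInstance inferInstance
    (finiteSecondMoment_of_ae_mem hEb (ae_cond_mem hEm))
    (finiteSecondMoment_of_ae_mem (toFinite A).isBounded hA) cond_absolutelyContinuous _ hopt
  have hmass := mul_self_measure_eq_of_prod_eq_map_graph hT hplan (measurableSet_singleton x)
  rw [uniformOn_pair_singleton hx.symm, ← ENNReal.mul_inv (by simp) (by simp),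
    inv_inj] at hmass
  norm_num at hmass

lemma condA_of_measure_fixedPoints_eq_zero {X : Type*} [MetricSpace X] [MeasurableSpace X]
    {m : Measure X} {x₀ : X} {s : ℝ} (hs : 0 < s) (hball : 0 < m (ball x₀ s))
    (hfix : ∀ f : X ≃ᵢ X, f ≠ 1 → m {x | f x = x} = 0) (G : Subgroup (X ≃ᵢ X)) :
    CondA m G := by
  obtain ⟨FIX, hpos, hlt⟩ := exists_between hball
  exact ⟨x₀, s, FIX, hs, hpos, hlt,
    fun g _ hg => (measure_mono_null inter_subset_left (hfix g hg)).trans_lt hpos⟩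

theorem fixed_points_null_of_plans_induced_by_maps_general
    {X : Type*} [MetricSpace X] [MeasurableSpace X] [BorelSpace X]
    (m : Measure X) (hm0 : m ≠ 0)
    (hfin : ∀ s : Set X, Bornology.IsBounded s → m s ≠ ∞)
    (hsupp : ∀ U : Set X, IsOpen U → U.Nonempty → 0 < m U)
    (H : ∀ μ₀ μ₁ : Measure X, IsProbabilityMeasure μ₀ → IsProbabilityMeasure μ₁ →
      FiniteSecondMoment μ₀ → FiniteSecondMoment μ₁ → μ₀ ≪ m →
      ∀ pl : Measure (X × X), IsOptimalPlan pl μ₀ μ₁ →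
        ∃ T : X → X, Measurable T ∧ pl = μ₀.map (fun x => (x, T x))) :
    (∀ f : X ≃ᵢ X, f ≠ 1 → m {x : X | f x = x} = 0) ∧
      CondA m (⊤ : Subgroup (X ≃ᵢ X)) ∧ CondA m (isoMeasure m) := by
  have hfix : ∀ f : X ≃ᵢ X, f ≠ 1 → m {x : X | f x = x} = 0 :=
    fun f hf => f.measure_fixedPoints_eq_zero hfin H hf
  have : NeZero m := ⟨hm0⟩
  obtain ⟨x₀⟩ := Measure.nonempty_of_neZero m
  have hball : 0 < m (ball x₀ 1) := hsupp _ isOpen_ball ⟨x₀, mem_ball_self one_pos⟩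
  exact ⟨hfix, condA_of_measure_fixedPoints_eq_zero one_pos hball hfix ⊤,
    condA_of_measure_fixedPoints_eq_zero one_pos hball hfix (isoMeasure m)⟩

/-- In a locally compact length metric measure space in which every
optimal plan issued from an absolutely continuous measure is induced by a map, every
nontrivial isometry has fixed point set of measure zero; in particular condition (a)
holds both for `ISO(X)` and for `ISO_m(X)`. -/
theorem fixed_points_null_of_plans_induced_by_maps
    {X : Type*} [MetricSpace X] [TopologicalSpace.SeparableSpace X] [CompleteSpace X]
    [LocallyCompactSpace X] [MeasurableSpace X] [BorelSpace X]
    (m : Measure X) (hm0 : m ≠ 0)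
    (hfin : ∀ s : Set X, Bornology.IsBounded s → m s ≠ ∞)
    (hsupp : ∀ U : Set X, IsOpen U → U.Nonempty → 0 < m U)
    (hlength : IsLengthSpace X)
    (H : ∀ μ₀ μ₁ : Measure X, IsProbabilityMeasure μ₀ → IsProbabilityMeasure μ₁ →
      FiniteSecondMoment μ₀ → FiniteSecondMoment μ₁ → μ₀ ≪ m →
      ∀ pl : Measure (X × X), IsOptimalPlan pl μ₀ μ₁ →
        ∃ T : X → X, Measurable T ∧ pl = μ₀.map (fun x => (x, T x))) :
    (∀ f : X ≃ᵢ X, f ≠ 1 → m {x : X | f x = x} = 0) ∧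
      CondA m (⊤ : Subgroup (X ≃ᵢ X)) ∧ CondA m (isoMeasure m) :=
  fixed_points_null_of_plans_induced_by_maps_general m hm0 hfin hsupp H
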